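/- Let φ : [α₁,α₂] → [β₁,β₂] be a continuous strictly increasing bijection with inverse ψ : [β₁,β₂] → [α₁,α₂], and define F(a,b) = ∫_{α₁}^{a} φ(x) dx + ∫_{β₁}^{b} ψ(x) dx − a·b + α₁·β₁. Then for every a ∈ [α₁,α₂] and b ∈ [β₁,β₂] one has the identity F(a,b) + F(ψ(b), φ(a)) = −(ψ(b) − a)·(φ(a) − b). -/

import Mathlib

/-!
Applying Young's equality `∫_{α₁}^a φ + ∫_{β₁}^{φ a} ψ = a φ(a) - α₁ β₁` at `a` and at `ψ b`
and adding gives the identity. For Young's equality, the increment of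
`G t = ∫_{α₁}^t φ + ∫_{β₁}^{φ t} ψ - t φ(t)` over `[s, t]` is at most the area
`(t - s)(φ t - φ s)` of the box it lives in. Summed over the two halves of `[s, t]`, these
areas add up to half that of the whole box, so repeated bisection forces `G` to be constant.
-/

open Set intervalIntegral

open Filter in
theorem Set.OrdConnected.eq_of_abs_sub_le_mul_sub {G f : ℝ → ℝ} {s : Set ℝ} (hs : s.OrdConnected)
    (h : ∀ x ∈ s, ∀ y ∈ s, x ≤ y → |G y - G x| ≤ (y - x) * (f y - f x))
    {x y : ℝ} (hx : x ∈ s) (hy : y ∈ s) (hxy : x ≤ y) : G y = G x := by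
  have halve : ∀ n : ℕ, ∀ x ∈ s, ∀ y ∈ s, x ≤ y →
      |G y - G x| ≤ (y - x) * (f y - f x) / 2 ^ n := by
    intro n
    induction n with
    | zero => simpa using h
    | succ n ih =>
      intro x hx y hy hxy
      have hm : (x + y) / 2 ∈ s := hs.out hx hy ⟨by linarith, by linarith⟩
      calc |G y - G x| ≤ |G y - G ((x + y) / 2)| + |G ((x + y) / 2) - G x| := abs_sub_le _ _ _
        _ ≤ (y - (x + y) / 2) * (f y - f ((x + y) / 2)) / 2 ^ n
            + ((x + y) / 2 - x) * (f ((x + y) / 2) - f x) / 2 ^ n :=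
          add_le_add (ih _ hm y hy (by linarith)) (ih x hx _ hm (by linarith))
        _ = (y - x) * (f y - f x) / 2 ^ (n + 1) := by rw [pow_succ]; field_simp; ring
  have hlim : Tendsto (fun n : ℕ => (y - x) * (f y - f x) / 2 ^ n) atTop (nhds 0) :=
    tendsto_const_nhds.div_atTop (tendsto_pow_atTop_atTop_of_one_lt one_lt_two)
  have hle : |G y - G x| ≤ 0 := ge_of_tendsto' hlim fun n => halve n x hx y hy hxy
  exact sub_eq_zero.1 (abs_nonpos_iff.1 hle)

theorem MonotoneOn.sub_mul_le_intervalIntegral {f : ℝ → ℝ} {a b : ℝ} (hf : MonotoneOn f (Icc a b))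
    (hab : a ≤ b) : (b - a) * f a ≤ ∫ x in a..b, f x := by
  simpa using integral_mono_on (μ := MeasureTheory.volume) hab intervalIntegrable_const
    (uIcc_of_le hab ▸ hf).intervalIntegrable fun x hx => hf (left_mem_Icc.2 hab) hx hx.1

theorem MonotoneOn.intervalIntegral_le_sub_mul {f : ℝ → ℝ} {a b : ℝ} (hf : MonotoneOn f (Icc a b))
    (hab : a ≤ b) : ∫ x in a..b, f x ≤ (b - a) * f b := by
  simpa using integral_mono_on (μ := MeasureTheory.volume) hab
    (uIcc_of_le hab ▸ hf).intervalIntegrable intervalIntegrable_const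
    fun x hx => hf hx (right_mem_Icc.2 hab) hx.2

section Young

variable {φ ψ : ℝ → ℝ}

theorem abs_integral_add_integral_sub_mul_sub_le {s t : ℝ} (hφ : MonotoneOn φ (Icc s t))
    (hψ : MonotoneOn ψ (Icc (φ s) (φ t))) (hinv : LeftInvOn ψ φ {s, t}) (hst : s ≤ t) :
    |(∫ x in s..t, φ x) + (∫ y in φ s..φ t, ψ y) - (t * φ t - s * φ s)|
      ≤ (t - s) * (φ t - φ s) := by
  have hφst : φ s ≤ φ t := hφ (left_mem_Icc.2 hst) (right_mem_Icc.2 hst) hst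
  have hφ₁ := hφ.sub_mul_le_intervalIntegral hst
  have hφ₂ := hφ.intervalIntegral_le_sub_mul hst
  have hψ₁ := hψ.sub_mul_le_intervalIntegral hφst
  have hψ₂ := hψ.intervalIntegral_le_sub_mul hφst
  rw [hinv (by simp)] at hψ₁
  rw [hinv (by simp)] at hψ₂
  rw [abs_le]
  constructor <;> nlinarith

/-- Young's equality. -/
theorem MonotoneOn.integral_add_integral_of_leftInvOn {α₁ α₂ β₁ β₂ a : ℝ}
    (hφ : MonotoneOn φ (Icc α₁ α₂)) (hψ : MonotoneOn ψ (Icc β₁ β₂))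
    (hφmaps : MapsTo φ (Icc α₁ α₂) (Icc β₁ β₂)) (hinv : LeftInvOn ψ φ (Icc α₁ α₂))
    (ha : a ∈ Icc α₁ α₂) :
    (∫ x in α₁..a, φ x) + (∫ y in φ α₁..φ a, ψ y) = a * φ a - α₁ * φ α₁ := by
  set G : ℝ → ℝ := fun t => (∫ x in α₁..t, φ x) + (∫ y in φ α₁..φ t, ψ y) - t * φ t
  have hα₁ : α₁ ∈ Icc α₁ α₂ := ⟨le_rfl, ha.1.trans ha.2⟩
  have hφint {p q} (hp : p ∈ Icc α₁ α₂) (hq : q ∈ Icc α₁ α₂) :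
      IntervalIntegrable φ MeasureTheory.volume p q :=
    (hφ.mono (uIcc_subset_Icc hp hq)).intervalIntegrable
  have hψint {p q} (hp : p ∈ Icc α₁ α₂) (hq : q ∈ Icc α₁ α₂) :
      IntervalIntegrable ψ MeasureTheory.volume (φ p) (φ q) :=
    (hψ.mono (uIcc_subset_Icc (hφmaps hp) (hφmaps hq))).intervalIntegrable
  have hG : ∀ s ∈ Icc α₁ α₂, ∀ t ∈ Icc α₁ α₂, s ≤ t →
      |G t - G s| ≤ (t - s) * (φ t - φ s) := by
    intro s hs t ht hst
    have hsub : G t - G s =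
        (∫ x in s..t, φ x) + (∫ y in φ s..φ t, ψ y) - (t * φ t - s * φ s) := by
      rw [← integral_interval_sub_left (hφint hα₁ ht) (hφint hα₁ hs),
        ← integral_interval_sub_left (hψint hα₁ ht) (hψint hα₁ hs)]
      ring
    rw [hsub]
    refine abs_integral_add_integral_sub_mul_sub_le (hφ.mono (Icc_subset_Icc hs.1 ht.2))
      (hψ.mono (Icc_subset_Icc (hφmaps hs).1 (hφmaps ht).2)) ?_ hst
    exact hinv.mono (by simp [insert_subset_iff, hs, ht])
  have hGa := ordConnected_Icc.eq_of_abs_sub_le_mul_sub hG hα₁ ha ha.1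
  simp only [G, integral_same] at hGa
  linarith

end Young

theorem young_reflection_identity_general
    (α₁ α₂ β₁ β₂ : ℝ) (φ ψ : ℝ → ℝ)
    (hmono : StrictMonoOn φ (Icc α₁ α₂))
    (hbij : BijOn φ (Icc α₁ α₂) (Icc β₁ β₂))
    (hinvL : ∀ x ∈ Icc α₁ α₂, ψ (φ x) = x)
    (hinvR : ∀ y ∈ Icc β₁ β₂, φ (ψ y) = y)
    (hψmaps : MapsTo ψ (Icc β₁ β₂) (Icc α₁ α₂))
    (a b : ℝ) (ha : a ∈ Icc α₁ α₂) (hb : b ∈ Icc β₁ β₂) :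
    ((∫ x in α₁..a, φ x) + (∫ x in β₁..b, ψ x) - a * b + α₁ * β₁) +
    ((∫ x in α₁..(ψ b), φ x) + (∫ x in β₁..(φ a), ψ x) - (ψ b) * (φ a) + α₁ * β₁)
      = -(ψ b - a) * (φ a - b) := by
  have hα₁ : α₁ ∈ Icc α₁ α₂ := ⟨le_rfl, ha.1.trans ha.2⟩
  have hβ₁ : β₁ ∈ Icc β₁ β₂ := ⟨le_rfl, hb.1.trans hb.2⟩
  have hψmono : MonotoneOn ψ (Icc β₁ β₂) := fun y₁ h₁ y₂ h₂ h12 =>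
    (hmono.le_iff_le (hψmaps h₁) (hψmaps h₂)).1 (by rwa [hinvR y₁ h₁, hinvR y₂ h₂])
  have hφα₁ : φ α₁ = β₁ := by
    refine le_antisymm ?_ (hbij.mapsTo hα₁).1
    simpa [hinvR β₁ hβ₁] using hmono.monotoneOn hα₁ (hψmaps hβ₁) (hψmaps hβ₁).1
  have young {x} (hx : x ∈ Icc α₁ α₂) :=
    hmono.monotoneOn.integral_add_integral_of_leftInvOn hψmono hbij.mapsTo hinvL hx
  have young_a := young ha
  have young_ψb := young (hψmaps hb)
  rw [hφα₁] at young_a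
  rw [hφα₁, hinvR b hb] at young_ψb
  linear_combination young_a + young_ψb

theorem young_reflection_identity
    (α₁ α₂ β₁ β₂ : ℝ) (φ ψ : ℝ → ℝ)
    (hα : α₁ < α₂) (hβ : β₁ < β₂)
    (hcont : ContinuousOn φ (Icc α₁ α₂))
    (hmono : StrictMonoOn φ (Icc α₁ α₂))
    (hbij : BijOn φ (Icc α₁ α₂) (Icc β₁ β₂))
    (hinvL : ∀ x ∈ Icc α₁ α₂, ψ (φ x) = x)
    (hinvR : ∀ y ∈ Icc β₁ β₂, φ (ψ y) = y)
    (hψmaps : MapsTo ψ (Icc β₁ β₂) (Icc α₁ α₂))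
    (a b : ℝ) (ha : a ∈ Icc α₁ α₂) (hb : b ∈ Icc β₁ β₂) :
    ((∫ x in α₁..a, φ x) + (∫ x in β₁..b, ψ x) - a * b + α₁ * β₁) +
    ((∫ x in α₁..(ψ b), φ x) + (∫ x in β₁..(φ a), ψ x) - (ψ b) * (φ a) + α₁ * β₁)
      = -(ψ b - a) * (φ a - b) :=
  young_reflection_identity_general α₁ α₂ β₁ β₂ φ ψ hmono hbij hinvL hinvR hψmaps a b ha hb
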